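/- arXiv:2206.08117 — 3 statements merged into one kernel-verified Lean document; each statement's English description precedes it below -/
import Mathlib

section
/- The function F(x) = 4·arctan(√(1+2x)) − √(1+2x)·(3+4x)/(1+x)² is strictly increasing on [0,∞) and is a bijection from [0,∞) onto [π−3, 2π). -/
/-! Substituting `t = √(1 + 2x)` turns `F` into `G t = 4 arctan t - 4t(2t² + 1)/(t² + 1)²`, whose
derivative `4t²(3t² - 1)/(t² + 1)³` is positive for `t > 1/√3`, in particular on `t ≥ 1`, the image
of `x ≥ 0`. The rational part of `G` is squeezed between `0` and `8/t`, so `F` increases from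
`F 0 = π - 3` towards `2π`; by continuity it attains every value in between. -/

open Real Set

noncomputable def F (x : ℝ) : ℝ :=
  4 * Real.arctan (Real.sqrt (1 + 2 * x)) -
    Real.sqrt (1 + 2 * x) * (3 + 4 * x) / (1 + x) ^ 2

open Filter Topology

section IntermediateValue

variable {α δ : Type*} [ConditionallyCompleteLinearOrder α] [TopologicalSpace α] [OrderTopology α]
  [DenselyOrdered α] [NoMaxOrder α] [LinearOrder δ] [TopologicalSpace δ] [OrderClosedTopology δ]

theorem ContinuousOn.image_Ici_of_strictMonoOn_of_tendsto {f : α → δ} {a : α} {b : δ}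
    (hf : ContinuousOn f (Ici a)) (hmono : StrictMonoOn f (Ici a)) (htop : Tendsto f atTop (𝓝 b)) :
    f '' Ici a = Ico (f a) b := by
  refine subset_antisymm ?_ <|
    isPreconnected_Ici.intermediate_value_Ico self_mem_Ici (le_principal_iff.mpr (Ici_mem_atTop a))
      hf htop
  rintro _ ⟨x, hx, rfl⟩
  obtain ⟨y, hxy⟩ := exists_gt x
  have hy : y ∈ Ici a := le_trans hx hxy.le
  have hfy : f y ≤ b := ge_of_tendsto htop <| (eventually_ge_atTop y).mono fun z hz =>
    hmono.monotoneOn hy (le_trans hy hz) hz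
  exact ⟨hmono.monotoneOn self_mem_Ici hx hx, (hmono hx hy hxy).trans_le hfy⟩

end IntermediateValue

noncomputable def G (t : ℝ) : ℝ :=
  4 * arctan t - 4 * t * (2 * t ^ 2 + 1) / (t ^ 2 + 1) ^ 2

lemma F_eq_G_comp : F = G ∘ fun x => √(1 + 2 * x) := by
  ext x
  rcases le_or_gt 0 (1 + 2 * x) with hx | hx
  · have hs : √(1 + 2 * x) ^ 2 = 1 + 2 * x := sq_sqrt hx
    have h1x : 1 + x ≠ 0 := by linarith
    simp only [F, G, Function.comp_apply, hs]
    field_simp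
    ring
  · simp [F, G, sqrt_eq_zero_of_nonpos hx.le]

lemma continuous_G : Continuous G := by
  unfold G
  fun_prop (disch := intro t; positivity)

lemma hasDerivAt_G (t : ℝ) : HasDerivAt G (4 * t ^ 2 * (3 * t ^ 2 - 1) / (t ^ 2 + 1) ^ 3) t := by
  have hsq : HasDerivAt (fun t : ℝ => t ^ 2) (2 * t) t := by
    simpa using hasDerivAt_pow 2 t
  have hnum : HasDerivAt (fun t : ℝ => 4 * t * (2 * t ^ 2 + 1)) (24 * t ^ 2 + 4) t :=
    (((hasDerivAt_id' t).const_mul 4).mul ((hsq.const_mul 2).add_const 1)).congr_deriv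
      (by ring)
  have hden : HasDerivAt (fun t : ℝ => (t ^ 2 + 1) ^ 2) (4 * t * (t ^ 2 + 1)) t :=
    ((hsq.add_const 1).pow 2).congr_deriv (by push_cast; ring)
  refine (((hasDerivAt_arctan t).const_mul 4).sub
    (hnum.div hden (by positivity))).congr_deriv ?_
  field_simp
  ring

lemma strictMonoOn_G : StrictMonoOn G (Ici (√3)⁻¹) := by
  refine strictMonoOn_of_deriv_pos (convex_Ici _) continuous_G.continuousOn fun t ht => ?_
  rw [interior_Ici, mem_Ioi] at ht
  have h3 : 1 < √3 * t := by
    rwa [inv_lt_iff_one_lt_mul₀' (by positivity)] at ht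
  have : 1 < 3 * t ^ 2 := by
    nlinarith [sq_sqrt (show (0 : ℝ) ≤ 3 by norm_num)]
  rw [(hasDerivAt_G t).deriv]
  exact div_pos (mul_pos (by linarith) (by linarith)) (by positivity)

lemma tendsto_G_atTop : Tendsto G atTop (𝓝 (2 * π)) := by
  have hrat : Tendsto (fun t : ℝ => 4 * t * (2 * t ^ 2 + 1) / (t ^ 2 + 1) ^ 2) atTop (𝓝 0) := by
    refine tendsto_of_tendsto_of_tendsto_of_le_of_le' tendsto_const_nhds
      (tendsto_const_nhds.div_atTop tendsto_id : Tendsto (fun t : ℝ => 8 / t) atTop (𝓝 0)) ?_ ?_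
    · filter_upwards [eventually_ge_atTop 0] with t ht
      positivity
    · filter_upwards [eventually_gt_atTop 0] with t ht
      rw [div_le_div_iff₀ (by positivity) ht]
      nlinarith
  rw [show 2 * π = 4 * (π / 2) - 0 by ring]
  exact ((tendsto_arctan_atTop.mono_right nhdsWithin_le_nhds).const_mul 4).sub hrat

lemma continuous_F : Continuous F :=
  F_eq_G_comp ▸ continuous_G.comp (by fun_prop)

lemma strictMonoOn_F : StrictMonoOn F (Ici (-1 / 3)) := by
  rw [F_eq_G_comp]
  refine strictMonoOn_G.comp (fun x hx y _ hxy => ?_) (fun x hx => ?_)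
  · exact sqrt_lt_sqrt (by linarith [mem_Ici.mp hx]) (by linarith)
  · rw [mem_Ici, ← sqrt_inv]
    exact sqrt_le_sqrt (by linarith [mem_Ici.mp hx])

lemma tendsto_F_atTop : Tendsto F atTop (𝓝 (2 * π)) :=
  F_eq_G_comp ▸ tendsto_G_atTop.comp
    (tendsto_sqrt_atTop.comp (tendsto_atTop_add_const_left _ _ (tendsto_id.const_mul_atTop two_pos)))

lemma F_zero : F 0 = π - 3 := by
  simp [F, arctan_one]
  ring

theorem stmt_1 :
    StrictMonoOn F (Set.Ici (0 : ℝ)) ∧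
      Set.BijOn F (Set.Ici (0 : ℝ)) (Set.Ico (Real.pi - 3) (2 * Real.pi)) := by
  have hmono : StrictMonoOn F (Ici 0) := strictMonoOn_F.mono (Ici_subset_Ici.mpr (by norm_num))
  have himage : F '' Ici 0 = Ico (π - 3) (2 * π) := by
    rw [continuous_F.continuousOn.image_Ici_of_strictMonoOn_of_tendsto hmono tendsto_F_atTop,
      F_zero]
  exact ⟨hmono, himage ▸ hmono.injOn.bijOn_image⟩
end

section
/- Let f, g : [0,T) → ℝ solve the linear ODE system f' = β(1−f−g) + αg, g' = rβ(1−f−g) − αg with f(0) = g(0) = 0, where r, β, α are the equilibrium functions of the paper (β(t) = c·(1+r(t))²/(r(t)(1+2r(t))^{3/2}), α(t) = c·(1+r(t))²/((1+3r(t))(1+2r(t))^{3/2}), c = σ_w²r₀²(1+2r₀)^{3/2}/(σ_a²(1+r₀)²)). Then f(t) = 1 − (1+2r(t))^{3/2}/(r₀√(1+2r₀)(1+r(t))) + (1+r₀−r₀²)(1+2r(t))/(r₀(1+2r₀)(1+r(t))) and g(t) = ((1+2r(t))/(1+r(t)))·((1+r(t)−r(t)²)/(r₀√(1+2r₀)√(1+2r(t)))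 − (1+r₀−r₀²)/(r₀(1+2r₀))). -/
/-!
Along a solution, `r' = -(1 + r)(1 + 2r) α` and `r β = (1 + 3r) α`, so after the change of
variable `x = r(t)` the system becomes triangular in `U = 1 - f - g` and `g`:
`dU/dx = (1 + 3x) U / (x (1 + 2x))` is solved by `U = x √(1 + 2x) / a`, and then
`dg/dx = (g - (1 + 3x) U) / ((1 + x)(1 + 2x))` is solved by
`g = (1 + 2x) / (1 + x) · ((1 + x - x²) / (a √(1 + 2x)) - k)`.
The constants `a = r₀ √(1 + 2r₀)` and `k` come from `f(0) = g(0) = 0`, and a scalar linear ODE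
with continuous coefficients has unique solutions, which identifies `U` and `g`, hence `f`.
-/

open Set Real

theorem rpow_three_halves {x : ℝ} (hx : 0 ≤ x) : x ^ (3 / 2 : ℝ) = x * √x := by
  rw [sqrt_eq_rpow, ← rpow_one_add' hx (by norm_num)]
  norm_num

theorem hasDerivAt_sqrt_one_add_two_mul {x : ℝ} (hx : 0 < 1 + 2 * x) :
    HasDerivAt (fun y => √(1 + 2 * y)) (1 / √(1 + 2 * x)) x :=
  ((((hasDerivAt_id' x).const_mul 2).const_add 1).sqrt hx.ne').congr_deriv (by field_simp)

theorem eqOn_Icc_of_hasDerivAt_linear {E : Type*} [NormedAddCommGroup E] [NormedSpace ℝ E]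
    {p : ℝ → ℝ} {q x y : ℝ → E} {a b : ℝ} (hp : ContinuousOn p (Icc a b))
    (hx : ∀ t ∈ Icc a b, HasDerivAt x (p t • x t + q t) t)
    (hy : ∀ t ∈ Icc a b, HasDerivAt y (p t • y t + q t) t) (ha : x a = y a) :
    EqOn x y (Icc a b) := by
  obtain ⟨K, hK⟩ := isCompact_Icc.exists_bound_of_continuousOn hp
  have hlip : ∀ t ∈ Ico a b, LipschitzOnWith K.toNNReal (fun z => p t • z + q t) univ := by
    intro t ht
    refine (LipschitzWith.of_dist_le_mul fun z w => ?_).lipschitzOnWith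
    rw [dist_add_right, dist_smul₀]
    gcongr
    exact (hK t (Ico_subset_Icc_self ht)).trans (le_max_left _ _)
  have hcont : ∀ z : ℝ → E, (∀ t ∈ Icc a b, HasDerivAt z (p t • z t + q t) t) →
      ContinuousOn z (Icc a b) := fun z hz t ht => (hz t ht).continuousAt.continuousWithinAt
  exact ODE_solution_unique_of_mem_Icc_right hlip (hcont x hx)
    (fun t ht => (hx t (Ico_subset_Icc_self ht)).hasDerivWithinAt) (fun _ _ => mem_univ _)
    (hcont y hy) (fun t ht => (hy t (Ico_subset_Icc_self ht)).hasDerivWithinAt)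
    (fun _ _ => mem_univ _) ha

noncomputable def solU (a x : ℝ) : ℝ := x * √(1 + 2 * x) / a

noncomputable def solG (a k x : ℝ) : ℝ :=
  (1 + 2 * x) / (1 + x) * ((1 + x - x ^ 2) / (a * √(1 + 2 * x)) - k)

section

variable {a k x t : ℝ} {r α β : ℝ → ℝ}

theorem solU_self (hx : 0 < x) : solU (x * √(1 + 2 * x)) x = 1 :=
  div_self (by positivity)

theorem solG_self (hx : 0 ≤ 1 + 2 * x) :
    solG (x * √(1 + 2 * x)) ((1 + x - x ^ 2) / (x * (1 + 2 * x))) x = 0 := by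
  rw [solG, mul_assoc, mul_self_sqrt hx, sub_self, mul_zero]

theorem one_sub_solU_sub_solG {b d : ℝ} (hx : 0 < 1 + 2 * x) :
    1 - solU a x - solG a (b / d) x =
      1 - (1 + 2 * x) ^ (3 / 2 : ℝ) / (a * (1 + x)) + b * (1 + 2 * x) / (d * (1 + x)) := by
  have h1x : 1 + x ≠ 0 := by linarith
  have hs0 := (sqrt_pos.2 hx).ne'
  rw [rpow_three_halves hx.le]
  unfold solU solG
  have hs2 := sq_sqrt hx.le
  generalize √(1 + 2 * x) = s at hs0 hs2 ⊢
  field_simp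
  linear_combination (1 + x - x ^ 2) / a * hs2

theorem hasDerivAt_solU (hx : 0 < x) :
    HasDerivAt (solU a) ((1 + 3 * x) / (x * (1 + 2 * x)) * solU a x) x := by
  have h2x : 0 < 1 + 2 * x := by linarith
  refine (((hasDerivAt_id' x).mul (hasDerivAt_sqrt_one_add_two_mul h2x)).div_const a).congr_deriv ?_
  unfold solU
  have hs0 := (sqrt_pos.2 h2x).ne'
  have hs2 := sq_sqrt h2x.le
  generalize √(1 + 2 * x) = s at hs0 hs2 ⊢
  field_simp
  linear_combination (-x / a) * hs2

theorem hasDerivAt_solG (hx : 0 < 1 + 2 * x) :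
    HasDerivAt (solG a k)
      ((solG a k x - (1 + 3 * x) * solU a x) / ((1 + x) * (1 + 2 * x))) x := by
  have h1x : 0 < 1 + x := by linarith
  have hs0 := (sqrt_pos.2 hx).ne'
  have hfac : HasDerivAt (fun y => (1 + 2 * y) / (1 + y)) (1 / (1 + x) ^ 2) x :=
    ((((hasDerivAt_id' x).const_mul 2).const_add 1).div
      ((hasDerivAt_id' x).const_add 1) h1x.ne').congr_deriv (by field_simp; ring)
  have hnum : HasDerivAt (fun y => (1 + y - y ^ 2) / (a * √(1 + 2 * y)))
      (-(x * (1 + 3 * x)) / (a * √(1 + 2 * x) ^ 3)) x := by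
    refine (((((hasDerivAt_id' x).const_add 1).sub (hasDerivAt_pow 2 x)).div
      (hasDerivAt_sqrt_one_add_two_mul hx) hs0).div_const a).congr_deriv ?_
      |>.congr_of_eventuallyEq (.of_forall fun y => ?_)
    · field_simp
      rw [sq_sqrt hx.le]
      simp only [Pi.sub_apply]
      ring
    · simp only [Pi.div_apply, Pi.sub_apply, div_div, mul_comm]
  refine (hfac.mul (hnum.sub_const k)).congr_deriv ?_
  unfold solG solU
  have hs2 := sq_sqrt hx.le
  generalize √(1 + 2 * x) = s at hs0 hs2 ⊢
  -- with every `1 + 2 * x` written as `s ^ 2` the identity is one of rational functions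
  rw [← hs2]
  field_simp
  ring

theorem hasDerivAt_solU_comp (hrt : 0 < r t)
    (hr : HasDerivAt r (-((1 + r t) * (1 + 2 * r t) * α t)) t)
    (hβ : r t * β t = (1 + 3 * r t) * α t) :
    HasDerivAt (fun u => solU a (r u)) (-((1 + r t) * β t) * solU a (r t)) t := by
  refine ((hasDerivAt_solU hrt).comp t hr).congr_deriv ?_
  field_simp
  linear_combination solU a (r t) * hβ

theorem hasDerivAt_solG_comp (hrt : 0 < 1 + 2 * r t)
    (hr : HasDerivAt r (-((1 + r t) * (1 + 2 * r t) * α t)) t)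
    (hβ : r t * β t = (1 + 3 * r t) * α t) :
    HasDerivAt (fun u => solG a k (r u))
      (r t * β t * solU a (r t) - α t * solG a k (r t)) t := by
  have hd : (1 + r t) * (1 + 2 * r t) ≠ 0 := by nlinarith
  refine ((hasDerivAt_solG hrt).comp t hr).congr_deriv ?_
  rw [div_mul_eq_mul_div, div_eq_iff hd]
  linear_combination -(1 + r t) * (1 + 2 * r t) * solU a (r t) * hβ

end

theorem eqOn_solU_and_eqOn_solG {r α β f g : ℝ → ℝ} {t₀ t₁ a k : ℝ}
    (hr : ∀ t ∈ Icc t₀ t₁, 0 < r t)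
    (hr' : ∀ t ∈ Icc t₀ t₁, HasDerivAt r (-((1 + r t) * (1 + 2 * r t) * α t)) t)
    (hβα : ∀ t ∈ Icc t₀ t₁, r t * β t = (1 + 3 * r t) * α t)
    (hα : ContinuousOn α (Icc t₀ t₁)) (hβ : ContinuousOn β (Icc t₀ t₁))
    (hf : ∀ t ∈ Icc t₀ t₁, HasDerivAt f (β t * (1 - f t - g t) + α t * g t) t)
    (hg : ∀ t ∈ Icc t₀ t₁, HasDerivAt g (r t * β t * (1 - f t - g t) - α t * g t) t)
    (hfa : 1 - f t₀ - g t₀ = solU a (r t₀)) (hga : g t₀ = solG a k (r t₀)) :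
    EqOn (fun t => 1 - f t - g t) (fun t => solU a (r t)) (Icc t₀ t₁) ∧
      EqOn g (fun t => solG a k (r t)) (Icc t₀ t₁) := by
  have hrc : ContinuousOn r (Icc t₀ t₁) :=
    fun t ht => (hr' t ht).continuousAt.continuousWithinAt
  have hU : EqOn (fun t => 1 - f t - g t) (fun t => solU a (r t)) (Icc t₀ t₁) := by
    refine eqOn_Icc_of_hasDerivAt_linear (p := fun t => -((1 + r t) * β t)) (q := 0)
      (by fun_prop) (fun t ht => ?_) (fun t ht => ?_) hfa
    · refine (((hasDerivAt_const t 1).sub (hf t ht)).sub (hg t ht)).congr_deriv ?_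
      simp only [smul_eq_mul, Pi.zero_apply, add_zero]
      ring
    · simpa using hasDerivAt_solU_comp (hr t ht) (hr' t ht) (hβα t ht)
  refine ⟨hU, eqOn_Icc_of_hasDerivAt_linear (p := fun t => -α t)
    (q := fun t => r t * β t * solU a (r t)) (by fun_prop) (fun t ht => ?_) (fun t ht => ?_) hga⟩
  · refine (hg t ht).congr_deriv ?_
    rw [show 1 - f t - g t = _ from hU ht, smul_eq_mul]
    ring
  · refine (hasDerivAt_solG_comp (by linarith [hr t ht]) (hr' t ht) (hβα t ht)).congr_deriv ?_
    rw [smul_eq_mul]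
    ring

theorem stmt_14_general (T r₀ σa σw : ℝ) (hr₀ : 0 < r₀) (hσa : 0 < σa)
    (c : ℝ) (hc : c = σw ^ 2 * r₀ ^ 2 * (1 + 2 * r₀) ^ ((3 : ℝ) / 2) /
      (σa ^ 2 * (1 + r₀) ^ 2))
    (r S1 β α f g : ℝ → ℝ)
    (hr0 : r 0 = r₀)
    (hrange : ∀ t ∈ Set.Ico 0 T, r t ∈ Set.Ioc 0 r₀)
    (hS1 : ∀ t, S1 t = σa ^ 2 * (1 + 2 * r t) ^ ((3 : ℝ) / 2) * r t ^ 2 * (1 + r₀) ^ 2 /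
        ((1 + r t) ^ 2 * r₀ ^ 2 * (1 + 2 * r₀) ^ ((3 : ℝ) / 2)))
    (hrODE : ∀ t ∈ Set.Ico 0 T,
      HasDerivAt r
        (-(σw ^ 2 * r t ^ 2 * (1 + r t) * (1 + 2 * r t) / ((1 + 3 * r t) * S1 t))) t)
    (hβ : ∀ t, β t = c * ((1 + r t) ^ 2 / (r t * (1 + 2 * r t) ^ ((3 : ℝ) / 2))))
    (hα : ∀ t, α t = c * ((1 + r t) ^ 2 /
        ((1 + 3 * r t) * (1 + 2 * r t) ^ ((3 : ℝ) / 2))))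
    (hf0 : f 0 = 0) (hg0 : g 0 = 0)
    (hfODE : ∀ t ∈ Set.Ico 0 T,
      HasDerivAt f (β t * (1 - f t - g t) + α t * g t) t)
    (hgODE : ∀ t ∈ Set.Ico 0 T,
      HasDerivAt g (r t * β t * (1 - f t - g t) - α t * g t) t) :
    ∀ t ∈ Set.Ico 0 T,
      f t = 1 - (1 + 2 * r t) ^ ((3 : ℝ) / 2) /
            (r₀ * Real.sqrt (1 + 2 * r₀) * (1 + r t)) +
          (1 + r₀ - r₀ ^ 2) * (1 + 2 * r t) / (r₀ * (1 + 2 * r₀) * (1 + r t)) ∧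
      g t = (1 + 2 * r t) / (1 + r t) *
          ((1 + r t - r t ^ 2) / (r₀ * Real.sqrt (1 + 2 * r₀) * Real.sqrt (1 + 2 * r t)) -
            (1 + r₀ - r₀ ^ 2) / (r₀ * (1 + 2 * r₀))) := by
  intro t ht
  have hsub : Icc 0 t ⊆ Ico 0 T := fun u hu => ⟨hu.1, hu.2.trans_lt ht.2⟩
  have hrpos : ∀ u ∈ Icc 0 t, 0 < r u := fun u hu => (hrange u (hsub hu)).1
  have hβα : ∀ u ∈ Icc 0 t, r u * β u = (1 + 3 * r u) * α u := fun u hu => by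
    have := hrpos u hu
    rw [hβ, hα]
    field_simp
  have hr' : ∀ u ∈ Icc 0 t, HasDerivAt r (-((1 + r u) * (1 + 2 * r u) * α u)) u := by
    intro u hu
    have := hrpos u hu
    convert hrODE u (hsub hu) using 2
    rw [hS1, hα, hc]
    field_simp
  have hrc : ContinuousOn r (Icc 0 t) := fun u hu => (hr' u hu).continuousAt.continuousWithinAt
  have hP : ContinuousOn (fun u => (1 + 2 * r u) ^ ((3 : ℝ) / 2)) (Icc 0 t) :=
    (continuousOn_const.add (continuousOn_const.mul hrc)).rpow_const fun _ _ => Or.inr (by norm_num)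
  have hαc : ContinuousOn α (Icc 0 t) := by
    rw [funext hα]
    fun_prop (disch := intro u hu; have := hrpos u hu; positivity)
  have hβc : ContinuousOn β (Icc 0 t) := by
    rw [funext hβ]
    fun_prop (disch := intro u hu; have := hrpos u hu; positivity)
  obtain ⟨hU, hG⟩ := eqOn_solU_and_eqOn_solG (a := r₀ * √(1 + 2 * r₀))
    (k := (1 + r₀ - r₀ ^ 2) / (r₀ * (1 + 2 * r₀))) hrpos hr' hβα hαc hβc
    (fun u hu => hfODE u (hsub hu)) (fun u hu => hgODE u (hsub hu))
    (by simp [hf0, hg0, hr0, solU_self hr₀])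
    (by simp [hg0, hr0, solG_self (by linarith : (0 : ℝ) ≤ 1 + 2 * r₀)])
  have ht' : t ∈ Icc 0 t := ⟨ht.1, le_rfl⟩
  refine ⟨?_, hG ht'⟩
  rw [← one_sub_solU_sub_solG (by linarith [hrpos t ht'])]
  linarith [hU ht', hG ht']

theorem stmt_14 (T r₀ σa σw : ℝ) (hT : 0 < T) (hr₀ : 0 < r₀) (hσa : 0 < σa)
    (hσw : 0 < σw)
    (c : ℝ) (hc : c = σw ^ 2 * r₀ ^ 2 * (1 + 2 * r₀) ^ ((3 : ℝ) / 2) /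
      (σa ^ 2 * (1 + r₀) ^ 2))
    (r S1 β α f g : ℝ → ℝ)
    (hr0 : r 0 = r₀)
    (hrange : ∀ t ∈ Set.Ico 0 T, r t ∈ Set.Ioc 0 r₀)
    (hS1 : ∀ t, S1 t = σa ^ 2 * (1 + 2 * r t) ^ ((3 : ℝ) / 2) * r t ^ 2 * (1 + r₀) ^ 2 /
        ((1 + r t) ^ 2 * r₀ ^ 2 * (1 + 2 * r₀) ^ ((3 : ℝ) / 2)))
    (hrODE : ∀ t ∈ Set.Ico 0 T,
      HasDerivAt r
        (-(σw ^ 2 * r t ^ 2 * (1 + r t) * (1 + 2 * r t) / ((1 + 3 * r t) * S1 t))) t)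
    (hβ : ∀ t, β t = c * ((1 + r t) ^ 2 / (r t * (1 + 2 * r t) ^ ((3 : ℝ) / 2))))
    (hα : ∀ t, α t = c * ((1 + r t) ^ 2 /
        ((1 + 3 * r t) * (1 + 2 * r t) ^ ((3 : ℝ) / 2))))
    (hf0 : f 0 = 0) (hg0 : g 0 = 0)
    (hfODE : ∀ t ∈ Set.Ico 0 T,
      HasDerivAt f (β t * (1 - f t - g t) + α t * g t) t)
    (hgODE : ∀ t ∈ Set.Ico 0 T,
      HasDerivAt g (r t * β t * (1 - f t - g t) - α t * g t) t) :
    ∀ t ∈ Set.Ico 0 T,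
      f t = 1 - (1 + 2 * r t) ^ ((3 : ℝ) / 2) /
            (r₀ * Real.sqrt (1 + 2 * r₀) * (1 + r t)) +
          (1 + r₀ - r₀ ^ 2) * (1 + 2 * r t) / (r₀ * (1 + 2 * r₀) * (1 + r t)) ∧
      g t = (1 + 2 * r t) / (1 + r t) *
          ((1 + r t - r t ^ 2) / (r₀ * Real.sqrt (1 + 2 * r₀) * Real.sqrt (1 + 2 * r t)) -
            (1 + r₀ - r₀ ^ 2) / (r₀ * (1 + 2 * r₀))) :=
  stmt_14_general T r₀ σa σw hr₀ hσa c hc r S1 β α f g hr0 hrange hS1 hrODE hβ hα hf0 hg0 hfODE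
    hgODE
end

section
/- With f(t) = 1 − (1+2r(t))^{3/2}/(r₀√(1+2r₀)(1+r(t))) + (1+r₀−r₀²)(1+2r(t))/(r₀(1+2r₀)(1+r(t))) and r the equilibrium ODE solution with r(0) = r₀ > 0, r(T−) = 0, one has f''(0) = −σ_w⁴r₀⁴/(σ_a⁴(1+3r₀)) < 0 and f''(T−) = (3σ_w⁴r₀³(1+2r₀)²/(σ_a⁴(1+r₀)⁴))·(√(1+2r₀) − 1 + r₀(r₀−1)) > 0. -/
/-!
The function is `f = F ∘ r` with `F x = 1 - A (1 + 2x)^{3/2} / (1 + x) + B (1 + 2x) / (1 + x)`,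
and once the factor `r²` is cancelled the equation reads `r' = v r` with
`v x = -C (1 + x)³ / ((1 + 3x) √(1 + 2x))`, a velocity field that is smooth down to `x = 0`.
Two applications of the chain rule give `f'' = G ∘ r` with `G = (F' v)' v`, so `f''(0) = G r₀`
and, by continuity of `G` at `0`, `f''(T⁻) = G 0 = 3 C² (A - B)`.
The sign of that limit comes from `4 (s - 1 + a (a - 1)) = (s - 1)² ((s + 1)² - 2)`
for `s = √(1 + 2a) > 1`.
-/

open Set Filter

theorem Real.rpow_three_div_two_eq_mul_sqrt {y : ℝ} (hy : 0 ≤ y) :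
    y ^ ((3 : ℝ) / 2) = y * √y := by
  rw [show (3 : ℝ) / 2 = 1 + 1 / 2 by norm_num, Real.rpow_add' hy (by norm_num), Real.rpow_one,
    Real.sqrt_eq_rpow]

theorem sqrt_one_add_two_mul_sub_one_add_mul_sub_one_pos {a : ℝ} (ha : 0 < a) :
    0 < √(1 + 2 * a) - 1 + a * (a - 1) := by
  have hs := Real.sq_sqrt (by linarith : (0 : ℝ) ≤ 1 + 2 * a)
  have hs0 := Real.sqrt_nonneg (1 + 2 * a)
  generalize √(1 + 2 * a) = s at hs hs0
  have hs1 : 1 < s := by nlinarith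
  obtain rfl : a = (s ^ 2 - 1) / 2 := by linarith
  have key : 4 * (s - 1 + (s ^ 2 - 1) / 2 * ((s ^ 2 - 1) / 2 - 1)) =
      (s - 1) ^ 2 * ((s + 1) ^ 2 - 2) := by ring
  have : 0 < (s - 1) ^ 2 * ((s + 1) ^ 2 - 2) := mul_pos (by nlinarith) (by nlinarith)
  linarith

theorem HasDerivAt.eq_of_eqOn {s : Set ℝ} {g φ : ℝ → ℝ} {t a b : ℝ} (hg : HasDerivAt g a t)
    (hs : UniqueDiffWithinAt ℝ s t) (ht : t ∈ s) (hgφ : EqOn g φ s)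
    (hφ : HasDerivAt φ b t) : a = b :=
  hs.eq_deriv s (hg.hasDerivWithinAt.congr_of_mem (fun _ hy => (hgφ hy).symm) ht)
    hφ.hasDerivWithinAt

namespace Equilibrium

noncomputable def profile (A B x : ℝ) : ℝ :=
  1 - A * (1 + 2 * x) * √(1 + 2 * x) / (1 + x) + B * (1 + 2 * x) / (1 + x)

noncomputable def velocity (C x : ℝ) : ℝ :=
  -(C * (1 + x) ^ 3 / ((1 + 3 * x) * √(1 + 2 * x)))

noncomputable def profileRate (A B C x : ℝ) : ℝ :=
  C * (1 + x) * (A * (2 + x) - B / √(1 + 2 * x)) / (1 + 3 * x)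

noncomputable def profileAccel (A B C x : ℝ) : ℝ :=
  -(C ^ 2 * (1 + x) ^ 3 / (1 + 3 * x) ^ 3 *
    (A * (3 * x ^ 2 + 2 * x - 3) / √(1 + 2 * x) + B * (3 * x ^ 2 + 8 * x + 3) / (1 + 2 * x) ^ 2))

section Derivatives

variable {A B C x : ℝ}

theorem hasDerivAt_sqrt_one_add_two_mul (hx : 0 < 1 + 2 * x) :
    HasDerivAt (fun y => √(1 + 2 * y)) (1 / √(1 + 2 * x)) x := by
  have hlin : HasDerivAt (fun y : ℝ => 1 + 2 * y) 2 x := by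
    simpa using ((hasDerivAt_id x).const_mul (2 : ℝ)).const_add 1
  refine (hlin.sqrt hx.ne').congr_deriv ?_
  field_simp

theorem hasDerivAt_profile (hx : 0 < 1 + 2 * x) :
    HasDerivAt (profile A B) ((B - A * √(1 + 2 * x) * (2 + x)) / (1 + x) ^ 2) x := by
  have hs := Real.sq_sqrt hx.le
  have hs0 := Real.sqrt_pos.mpr hx
  have h1x : 0 < 1 + x := by linarith
  have hlin : HasDerivAt (fun y : ℝ => 1 + 2 * y) 2 x := by
    simpa using ((hasDerivAt_id x).const_mul (2 : ℝ)).const_add 1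
  have hone : HasDerivAt (fun y : ℝ => 1 + y) 1 x := by
    simpa using (hasDerivAt_id x).const_add (1 : ℝ)
  have h := (hasDerivAt_const x 1).sub
    (((hlin.const_mul A).mul (hasDerivAt_sqrt_one_add_two_mul hx)).div hone h1x.ne')
    |>.add ((hlin.const_mul B).div hone h1x.ne')
  refine h.congr_deriv ?_
  simp only [Pi.mul_apply]
  field_simp
  linear_combination (x * A + A) * hs

theorem hasDerivAt_profileRate (hx : 0 < 1 + 3 * x) :
    HasDerivAt (profileRate A B C)
      (C * (A * (3 * x ^ 2 + 2 * x - 3) / (1 + 3 * x) ^ 2 +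
        B * (3 * x ^ 2 + 8 * x + 3) / (√(1 + 2 * x) * (1 + 2 * x) * (1 + 3 * x) ^ 2))) x := by
  have h2x : 0 < 1 + 2 * x := by linarith
  have hs := Real.sq_sqrt h2x.le
  have hs0 := Real.sqrt_pos.mpr h2x
  have hone : HasDerivAt (fun y : ℝ => 1 + y) 1 x := by
    simpa using (hasDerivAt_id x).const_add (1 : ℝ)
  have hthree : HasDerivAt (fun y : ℝ => 1 + 3 * y) 3 x := by
    simpa using ((hasDerivAt_id x).const_mul (3 : ℝ)).const_add 1
  have htwo : HasDerivAt (fun y : ℝ => 2 + y) 1 x := by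
    simpa using (hasDerivAt_id x).const_add (2 : ℝ)
  have h := ((hone.const_mul C).mul ((htwo.const_mul A).sub
    ((hasDerivAt_const x B).div (hasDerivAt_sqrt_one_add_two_mul h2x) hs0.ne'))).div
    hthree hx.ne'
  refine h.congr_deriv ?_
  simp only [Pi.mul_apply, Pi.sub_apply, Pi.div_apply]
  field_simp
  generalize √(1 + 2 * x) = s at hs ⊢
  obtain rfl : x = (s ^ 2 - 1) / 2 := by linarith
  ring

theorem hasDerivAt_profile_comp {r : ℝ → ℝ} {t : ℝ} (hr : HasDerivAt r (velocity C (r t)) t)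
    (ht : 0 < 1 + 3 * r t) : HasDerivAt (profile A B ∘ r) (profileRate A B C (r t)) t := by
  have h2 : 0 < 1 + 2 * r t := by linarith
  refine ((hasDerivAt_profile h2).comp t hr).congr_deriv ?_
  have := Real.sqrt_pos.mpr h2
  unfold velocity profileRate
  field_simp
  ring

theorem hasDerivAt_profileRate_comp {r : ℝ → ℝ} {t : ℝ}
    (hr : HasDerivAt r (velocity C (r t)) t) (ht : 0 < 1 + 3 * r t) :
    HasDerivAt (profileRate A B C ∘ r) (profileAccel A B C (r t)) t := by
  have h2 : 0 < 1 + 2 * r t := by linarith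
  refine ((hasDerivAt_profileRate ht).comp t hr).congr_deriv ?_
  have hs := Real.sq_sqrt h2.le
  have hs0 := Real.sqrt_pos.mpr h2
  unfold velocity profileAccel
  generalize r t = x at ht hs hs0 ⊢
  generalize √(1 + 2 * x) = s at hs hs0 ⊢
  obtain rfl : x = (s ^ 2 - 1) / 2 := by linarith
  field_simp
  ring

end Derivatives

theorem eqOn_profileAccel_comp {s : Set ℝ} (hs : UniqueDiffOn ℝ s) {A B C : ℝ}
    {r f f₁ f₂ : ℝ → ℝ} (hr : ∀ t ∈ s, HasDerivAt r (velocity C (r t)) t)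
    (hrs : ∀ t ∈ s, 0 < 1 + 3 * r t) (hf : EqOn f (profile A B ∘ r) s)
    (hf₁ : ∀ t ∈ s, HasDerivAt f (f₁ t) t) (hf₂ : ∀ t ∈ s, HasDerivAt f₁ (f₂ t) t) :
    EqOn f₂ (profileAccel A B C ∘ r) s := by
  have hrate : EqOn f₁ (profileRate A B C ∘ r) s := fun t ht =>
    (hf₁ t ht).eq_of_eqOn (hs t ht) ht hf (hasDerivAt_profile_comp (hr t ht) (hrs t ht))
  exact fun t ht =>
    (hf₂ t ht).eq_of_eqOn (hs t ht) ht hrate (hasDerivAt_profileRate_comp (hr t ht) (hrs t ht))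

theorem profileAccel_zero (A B C : ℝ) : profileAccel A B C 0 = 3 * C ^ 2 * (A - B) := by
  norm_num [profileAccel]
  ring

theorem continuousAt_profileAccel_zero (A B C : ℝ) : ContinuousAt (profileAccel A B C) 0 := by
  unfold profileAccel
  fun_prop (disch := norm_num)

/-- With these coefficients `f = profile (coeffA r₀) (coeffB r₀) ∘ r`, and the equation for `r`,
once `r²` is cancelled, reads `r' = velocity (coeffC r₀ σa σw) r`. -/
noncomputable def coeffA (r₀ : ℝ) : ℝ := 1 / (r₀ * √(1 + 2 * r₀))

noncomputable def coeffB (r₀ : ℝ) : ℝ := (1 + r₀ - r₀ ^ 2) / (r₀ * (1 + 2 * r₀))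

noncomputable def coeffC (r₀ σa σw : ℝ) : ℝ :=
  σw ^ 2 * r₀ ^ 2 * (1 + 2 * r₀) * √(1 + 2 * r₀) / (σa ^ 2 * (1 + r₀) ^ 2)

variable {r₀ σa σw x : ℝ}

theorem profile_coeff_eq (hr₀ : 0 < r₀) (hx : 0 < 1 + 2 * x) :
    1 - (1 + 2 * x) ^ ((3 : ℝ) / 2) / (r₀ * √(1 + 2 * r₀) * (1 + x)) +
      (1 + r₀ - r₀ ^ 2) * (1 + 2 * x) / (r₀ * (1 + 2 * r₀) * (1 + x)) =
    profile (coeffA r₀) (coeffB r₀) x := by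
  have := Real.sqrt_pos.mpr (by linarith : (0 : ℝ) < 1 + 2 * r₀)
  have : 0 < 1 + x := by linarith
  rw [Real.rpow_three_div_two_eq_mul_sqrt hx.le, profile, coeffA, coeffB]
  field_simp

theorem velocity_coeff_eq (hr₀ : 0 < r₀) (hx : 0 < x) :
    -(σw ^ 2 * x ^ 2 * (1 + x) * (1 + 2 * x) /
      ((1 + 3 * x) * (σa ^ 2 * (1 + 2 * x) ^ ((3 : ℝ) / 2) * x ^ 2 * (1 + r₀) ^ 2 /
        ((1 + x) ^ 2 * r₀ ^ 2 * (1 + 2 * r₀) ^ ((3 : ℝ) / 2))))) =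
    velocity (coeffC r₀ σa σw) x := by
  have := Real.sqrt_pos.mpr (by linarith : (0 : ℝ) < 1 + 2 * x)
  have := Real.sqrt_pos.mpr (by linarith : (0 : ℝ) < 1 + 2 * r₀)
  rw [Real.rpow_three_div_two_eq_mul_sqrt (by linarith),
    Real.rpow_three_div_two_eq_mul_sqrt (by linarith), velocity, coeffC]
  field_simp

theorem profileAccel_coeff_initial (hr₀ : 0 < r₀) :
    profileAccel (coeffA r₀) (coeffB r₀) (coeffC r₀ σa σw) r₀ =
      -(σw ^ 4 * r₀ ^ 4 / (σa ^ 4 * (1 + 3 * r₀))) := by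
  have hs := Real.sq_sqrt (by linarith : (0 : ℝ) ≤ 1 + 2 * r₀)
  have hs0 := Real.sqrt_pos.mpr (by linarith : (0 : ℝ) < 1 + 2 * r₀)
  have : 0 < 1 + 3 * r₀ := by linarith
  unfold profileAccel coeffA coeffB coeffC
  generalize √(1 + 2 * r₀) = s at hs hs0 ⊢
  field_simp
  obtain rfl : r₀ = (s ^ 2 - 1) / 2 := by linarith
  ring

theorem profileAccel_coeff_zero (hr₀ : 0 < r₀) :
    profileAccel (coeffA r₀) (coeffB r₀) (coeffC r₀ σa σw) 0 =
      3 * σw ^ 4 * r₀ ^ 3 * (1 + 2 * r₀) ^ 2 / (σa ^ 4 * (1 + r₀) ^ 4) *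
        (√(1 + 2 * r₀) - 1 + r₀ * (r₀ - 1)) := by
  have hs := Real.sq_sqrt (by linarith : (0 : ℝ) ≤ 1 + 2 * r₀)
  have hs0 := Real.sqrt_pos.mpr (by linarith : (0 : ℝ) < 1 + 2 * r₀)
  rw [profileAccel_zero, coeffA, coeffB, coeffC]
  generalize √(1 + 2 * r₀) = s at hs hs0 ⊢
  field_simp
  obtain rfl : r₀ = (s ^ 2 - 1) / 2 := by linarith
  ring

end Equilibrium

theorem stmt_15 (T r₀ σa σw : ℝ) (hT : 0 < T) (hr₀ : 0 < r₀) (hσa : 0 < σa)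
    (hσw : 0 < σw)
    (r S1 f f1 f2 : ℝ → ℝ)
    (hr0 : r 0 = r₀)
    (hrange : ∀ t ∈ Set.Ico 0 T, r t ∈ Set.Ioc 0 r₀)
    (hrT : Filter.Tendsto r (nhdsWithin T (Set.Iio T)) (nhds 0))
    (hS1 : ∀ t, S1 t = σa ^ 2 * (1 + 2 * r t) ^ ((3 : ℝ) / 2) * r t ^ 2 * (1 + r₀) ^ 2 /
        ((1 + r t) ^ 2 * r₀ ^ 2 * (1 + 2 * r₀) ^ ((3 : ℝ) / 2)))
    (hrODE : ∀ t ∈ Set.Ico 0 T,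
      HasDerivAt r
        (-(σw ^ 2 * r t ^ 2 * (1 + r t) * (1 + 2 * r t) / ((1 + 3 * r t) * S1 t))) t)
    (hf : ∀ t ∈ Set.Ico 0 T,
      f t = 1 - (1 + 2 * r t) ^ ((3 : ℝ) / 2) /
            (r₀ * Real.sqrt (1 + 2 * r₀) * (1 + r t)) +
          (1 + r₀ - r₀ ^ 2) * (1 + 2 * r t) / (r₀ * (1 + 2 * r₀) * (1 + r t)))
    (hf1 : ∀ t ∈ Set.Ico 0 T, HasDerivAt f (f1 t) t)
    (hf2 : ∀ t ∈ Set.Ico 0 T, HasDerivAt f1 (f2 t) t) :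
    f2 0 = -(σw ^ 4 * r₀ ^ 4 / (σa ^ 4 * (1 + 3 * r₀))) ∧
      f2 0 < 0 ∧
      Filter.Tendsto f2 (nhdsWithin T (Set.Iio T))
        (nhds (3 * σw ^ 4 * r₀ ^ 3 * (1 + 2 * r₀) ^ 2 / (σa ^ 4 * (1 + r₀) ^ 4) *
          (Real.sqrt (1 + 2 * r₀) - 1 + r₀ * (r₀ - 1)))) ∧
      0 < 3 * σw ^ 4 * r₀ ^ 3 * (1 + 2 * r₀) ^ 2 / (σa ^ 4 * (1 + r₀) ^ 4) *
          (Real.sqrt (1 + 2 * r₀) - 1 + r₀ * (r₀ - 1)) := by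
  open Equilibrium in
  have hpos : ∀ t ∈ Ico 0 T, 0 < r t := fun t ht => (hrange t ht).1
  have hr : ∀ t ∈ Ico 0 T, HasDerivAt r (velocity (coeffC r₀ σa σw) (r t)) t := fun t ht => by
    simpa only [hS1, velocity_coeff_eq hr₀ (hpos t ht)] using hrODE t ht
  have hacc : EqOn f2 (profileAccel (coeffA r₀) (coeffB r₀) (coeffC r₀ σa σw) ∘ r) (Ico 0 T) :=
    eqOn_profileAccel_comp (uniqueDiffOn_Ico 0 T) hr (fun t ht => by linarith [hpos t ht])
      (fun t ht => (hf t ht).trans (profile_coeff_eq hr₀ (by linarith [hpos t ht]))) hf1 hf2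
  have h0 : f2 0 = -(σw ^ 4 * r₀ ^ 4 / (σa ^ 4 * (1 + 3 * r₀))) := by
    rw [hacc ⟨le_rfl, hT⟩, Function.comp_apply, hr0, profileAccel_coeff_initial hr₀]
  refine ⟨h0, h0 ▸ neg_neg_of_pos (by positivity), ?_,
    mul_pos (by positivity) (sqrt_one_add_two_mul_sub_one_add_mul_sub_one_pos hr₀)⟩
  rw [← profileAccel_coeff_zero hr₀]
  refine ((continuousAt_profileAccel_zero _ _ _).tendsto.comp hrT).congr' ?_
  filter_upwards [Ioo_mem_nhdsLT (half_lt_self hT)] with t ht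
  exact (hacc ⟨by linarith [ht.1], ht.2⟩).symm
end
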